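/- arXiv:1910.12536 — 6 statements merged into one kernel-verified Lean document; each statement's English description precedes it below -/
import Mathlib

section
/- Let η ∈ ℝ and let G be a digraph (with connected underlying graph) equipped with the η-function θ. Then the normalized η-Hermitian adjacency matrix of G equals the discriminant of the associated quantum walk: H̃_η(G) = K S_θ K*, where K = K(G^±) and S_θ = S_θ(G^±). -/
open Matrix Polynomial

noncomputable section

variable {V : Type} [Fintype V] [DecidableEq V]

/-- The set of symmetric arcs of a simple graph `G`: ordered pairs of adjacent vertices. -/
abbrev GArc (G : SimpleGraph V) : Type := {p : V × V // G.Adj p.1 p.2}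

/-- The origin of an arc. -/
def arcO {G : SimpleGraph V} (a : GArc G) : V := a.1.1

/-- The terminus of an arc. -/
def arcT {G : SimpleGraph V} (a : GArc G) : V := a.1.2

/-- The inverse of an arc. -/
def arcInv {G : SimpleGraph V} (a : GArc G) : GArc G := ⟨(a.1.2, a.1.1), a.2.symm⟩

/-- The boundary matrix `K`, with `K_{v,a} = δ_{v,t(a)} / √(deg t(a))`. -/
def bdK (G : SimpleGraph V) [DecidableRel G.Adj] : Matrix V (GArc G) ℂ :=
  fun v a => if v = arcT a then ((1 / Real.sqrt (G.degree (arcT a)) : ℝ) : ℂ) else 0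

/-- The coin operator `C = 2K*K - I`. -/
def coinC (G : SimpleGraph V) [DecidableRel G.Adj] : Matrix (GArc G) (GArc G) ℂ :=
  (2 : ℂ) • ((bdK G)ᴴ * bdK G) - 1

/-- The shift operator `S`, with `S_{ab} = δ_{a,b⁻¹}`. -/
def shiftS (G : SimpleGraph V) : Matrix (GArc G) (GArc G) ℂ :=
  fun a b => if a = arcInv b then 1 else 0

/-- The perturbed shift `S_θ`, with `(S_θ)_{ab} = e^{iθ(b)} δ_{a,b⁻¹}`. -/
def shiftStheta (G : SimpleGraph V) (θ : GArc G → ℝ) : Matrix (GArc G) (GArc G) ℂ :=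
  fun a b => if a = arcInv b then Complex.exp ((θ b : ℂ) * Complex.I) else 0

/-- The Grover transfer matrix `U = SC`. -/
def groverU (G : SimpleGraph V) [DecidableRel G.Adj] : Matrix (GArc G) (GArc G) ℂ :=
  shiftS G * coinC G

/-- The transfer matrix `U_θ = S_θ C`. -/
def transferU (G : SimpleGraph V) [DecidableRel G.Adj] (θ : GArc G → ℝ) :
    Matrix (GArc G) (GArc G) ℂ :=
  shiftStheta G θ * coinC G

/-- The diagonal matrix `D_θ` with `(D_θ)_{ab} = e^{iθ(a)} δ_{ab}`. -/
def Dtheta (G : SimpleGraph V) (θ : GArc G → ℝ) : Matrix (GArc G) (GArc G) ℂ :=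
  Matrix.diagonal fun a => Complex.exp ((θ a : ℂ) * Complex.I)

/-- The positive support of a (real-valued) complex matrix. -/
def suppPos {α : Type} (M : Matrix α α ℂ) : Matrix α α ℂ :=
  fun a b => if 0 < (M a b).re then 1 else 0

/-- The negative support of a (real-valued) complex matrix. -/
def suppNeg {α : Type} (M : Matrix α α ℂ) : Matrix α α ℂ :=
  fun a b => if (M a b).re < 0 then 1 else 0

/-- The positive support of a real matrix. -/
def suppPosR {α : Type} (M : Matrix α α ℝ) : Matrix α α ℝ :=
  fun a b => if 0 < M a b then 1 else 0

/-- The negative support of a real matrix. -/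
def suppNegR {α : Type} (M : Matrix α α ℝ) : Matrix α α ℝ :=
  fun a b => if M a b < 0 then 1 else 0

/-- A digraph on `V`: an irreflexive (Boolean) arc relation. -/
structure Dgraph (V : Type) where
  adj : V → V → Bool
  loopless : ∀ v, adj v v = false

namespace Dgraph

/-- `(x,y)` is an arc of `D`. -/
def Adj (D : Dgraph V) (x y : V) : Prop := D.adj x y = true

instance (D : Dgraph V) : DecidableRel D.Adj := fun _ _ => by unfold Adj; infer_instance

/-- The underlying (undirected simple) graph `G^±`. -/
def underlying (D : Dgraph V) : SimpleGraph V where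
  Adj x y := D.Adj x y ∨ D.Adj y x
  symm := ⟨fun _ _ h => h.symm⟩
  loopless := ⟨fun v h => by
    rcases h with h | h <;> exact absurd h (by simp [Adj, D.loopless v])⟩

instance (D : Dgraph V) : DecidableRel D.underlying.Adj :=
  fun x y => inferInstanceAs (Decidable (D.Adj x y ∨ D.Adj y x))

/-- The transpose digraph `G⁻¹`. -/
def transpose (D : Dgraph V) : Dgraph V where
  adj x y := D.adj y x
  loopless := D.loopless

end Dgraph

/-- The `η`-function of a digraph `D`: `η` on `A∖A⁻¹`, `-η` on `A⁻¹∖A`, `0` on digons. -/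
def etaFun (D : Dgraph V) (η : ℝ) (a : GArc D.underlying) : ℝ :=
  if D.Adj (arcO a) (arcT a) then (if D.Adj (arcT a) (arcO a) then 0 else η) else -η

/-- The `η`-Hermitian adjacency matrix `H_η`. -/
def Heta (D : Dgraph V) (η : ℝ) : Matrix V V ℂ :=
  fun x y =>
    if D.Adj x y then (if D.Adj y x then 1 else Complex.exp ((η : ℂ) * Complex.I))
    else if D.Adj y x then Complex.exp (-(η : ℂ) * Complex.I) else 0

/-- The diagonal matrix `D^{-1/2}` of inverse square roots of degrees. -/
def degHalfInv (D : Dgraph V) : Matrix V V ℂ :=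
  Matrix.diagonal fun x => ((1 / Real.sqrt (D.underlying.degree x) : ℝ) : ℂ)

/-- The normalized `η`-Hermitian adjacency matrix `H̃_η = D^{-1/2} H_η D^{-1/2}`. -/
def normHeta (D : Dgraph V) (η : ℝ) : Matrix V V ℂ :=
  degHalfInv D * Heta D η * degHalfInv D

/-- The multiset of preimages of `μ` under `φ(z) = (z + z⁻¹)/2` on the unit circle:
the distinct roots of `z² - 2μz + 1`. -/
def phiInv (μ : ℂ) : Multiset ℂ :=
  ((X ^ 2 - Polynomial.C (2 * μ) * X + 1 : Polynomial ℂ).roots).dedup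

/-- A closed path in a graph: a nonempty chain of arcs returning to its start. -/
structure ClosedPath (G : SimpleGraph V) where
  arcs : List (GArc G)
  ne : arcs ≠ []
  chain : arcs.Chain' fun a b => arcT a = arcO b
  closed : arcT (arcs.getLast ne) = arcO (arcs.head ne)

/-- `ℐ(c) = Σ_j θ(a_j)` for a closed path `c`. -/
def pathSum {G : SimpleGraph V} (θ : GArc G → ℝ) (c : ClosedPath G) : ℝ :=
  (c.arcs.map θ).sum

/-- `x ∈ 2πℤ`. -/
def in2piZ (x : ℝ) : Prop := ∃ m : ℤ, x = 2 * Real.pi * m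

/-- `x ∈ 2π(ℤ + 1/2)`. -/
def in2piZhalf (x : ℝ) : Prop := ∃ m : ℤ, x = 2 * Real.pi * (m + 1 / 2)

/-- The matrix `F_t` with `(F_t)_{x,a} = δ_{x,t(a)}`. -/
def Ft (G : SimpleGraph V) : Matrix V (GArc G) ℂ := fun x a => if x = arcT a then 1 else 0

/-- The matrix `F_o` with `(F_o)_{x,a} = δ_{x,o(a)}`. -/
def Fo (G : SimpleGraph V) : Matrix V (GArc G) ℂ := fun x a => if x = arcO a then 1 else 0

/-- The 0/1 matrix `R` with `R_{ab} = 1` iff `m(a,b) = (t(b),o(a)) ∈ A(G) ∩ A(G)⁻¹`. -/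
def Rmat (D : Dgraph V) : Matrix (GArc D.underlying) (GArc D.underlying) ℂ :=
  fun a b => if D.Adj (arcT b) (arcO a) ∧ D.Adj (arcO a) (arcT b) then 1 else 0

/-- `U_θ^{(n,+)}`: the 0/1 matrix with `(a,b)` entry `1` iff `Re(D_θ U_θⁿ)_{ab} > 0`. -/
def suppPow (D : Dgraph V) (η : ℝ) (n : ℕ) :
    Matrix (GArc D.underlying) (GArc D.underlying) ℂ :=
  suppPos (Dtheta D.underlying (etaFun D η) * transferU D.underlying (etaFun D η) ^ n)

/-- `U_θ^{(n,−)}`: the 0/1 matrix with `(a,b)` entry `1` iff `Re(D_θ U_θⁿ)_{ab} < 0`. -/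
def suppPowNeg (D : Dgraph V) (η : ℝ) (n : ℕ) :
    Matrix (GArc D.underlying) (GArc D.underlying) ℂ :=
  suppNeg (Dtheta D.underlying (etaFun D η) * transferU D.underlying (etaFun D η) ^ n)

/-- The number of digons of a digraph. -/
def digonCount (D : Dgraph V) : ℕ :=
  (Finset.univ.filter fun p : V × V => D.Adj p.1 p.2 ∧ D.Adj p.2 p.1).card / 2

/-- The digraph `Y_{a,n-a}`: two complete (digon) blocks `[a]` and `[n]∖[a]`, with all
arcs from the first block to the second. -/
def Ydigraph (n a : ℕ) : Dgraph (Fin n) where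
  adj x y := decide ((x ≠ y) ∧
    ((x.val < a ∧ y.val < a) ∨ (a ≤ x.val ∧ a ≤ y.val) ∨ (x.val < a ∧ a ≤ y.val)))
  loopless := fun v => by simp

/-- The shift operator as a real matrix. -/
def shiftSR (G : SimpleGraph V) : Matrix (GArc G) (GArc G) ℝ :=
  fun a b => if a = arcInv b then 1 else 0

/-- The Grover transfer matrix as a real matrix, given by its entries
`U_{ab} = (2/deg t(b)) δ_{t(b),o(a)} − δ_{a⁻¹,b}`. -/
def groverEnt (G : SimpleGraph V) [DecidableRel G.Adj] : Matrix (GArc G) (GArc G) ℝ :=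
  fun a b => 2 / (G.degree (arcT b)) * (if arcT b = arcO a then 1 else 0)
    - (if arcInv a = b then 1 else 0)

end

/-!
`S_θ` sends an arc `b` to `b⁻¹`, whose terminus is `o(b)`; hence `(K S_θ)_{x,b}` is nonzero only
when `o(b) = x`, and the `(x, y)` entry of `K S_θ K*` collects the single arc `b = (x, y)`, giving
`e^{iθ(x,y)} / √(deg x · deg y)`. By the choice of the `η`-function, `e^{iθ(x,y)} = (H_η)_{xy}`.
-/

section Discriminant

variable {V : Type} [Fintype V] [DecidableEq V]
  (G : SimpleGraph V) [DecidableRel G.Adj] (θ : GArc G → ℝ)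

lemma bdK_mul_shiftStheta_apply (x : V) (b : GArc G) :
    (bdK G * shiftStheta G θ) x b =
      if x = arcO b then ((1 / Real.sqrt (G.degree x) : ℝ) : ℂ) * Complex.exp (θ b * Complex.I)
      else 0 := by
  have hT : arcT (arcInv b) = arcO b := rfl
  rw [Matrix.mul_apply, Finset.sum_eq_single (arcInv b)]
  · by_cases hx : x = arcO b
    · subst hx
      simp [bdK, shiftStheta, hT]
      rfl
    · simp [bdK, shiftStheta, hT, hx]
  · intro c _ hc
    simp [shiftStheta, hc]
  · simp

lemma bdK_mul_shiftStheta_mul_conjTranspose_apply (x y : V) :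
    (bdK G * shiftStheta G θ * (bdK G)ᴴ) x y =
      if h : G.Adj x y then
        ((1 / Real.sqrt (G.degree x) : ℝ) : ℂ) * Complex.exp (θ ⟨(x, y), h⟩ * Complex.I) *
          ((1 / Real.sqrt (G.degree y) : ℝ) : ℂ)
      else 0 := by
  rw [Matrix.mul_apply]
  simp only [bdK_mul_shiftStheta_apply, conjTranspose_apply, bdK]
  split_ifs with hxy
  · rw [Finset.sum_eq_single ⟨(x, y), hxy⟩]
    · simp [arcO, arcT]
      exact Or.inl rfl
    · intro b _ hb
      split_ifs with hxb hyb
      · exact absurd (Subtype.ext (Prod.ext hxb.symm hyb.symm)) hb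
      all_goals simp
    · simp
  · refine Finset.sum_eq_zero fun b _ => ?_
    split_ifs with hxb hyb
    · exact absurd (hxb ▸ hyb ▸ b.2) hxy
    all_goals simp

end Discriminant

lemma Heta_apply {V : Type} (D : Dgraph V) (η : ℝ) (x y : V) :
    Heta D η x y =
      if h : D.underlying.Adj x y then Complex.exp (etaFun D η ⟨(x, y), h⟩ * Complex.I)
      else 0 := by
  by_cases hxy : D.Adj x y <;> by_cases hyx : D.Adj y x <;>
    simp [Heta, etaFun, arcO, arcT, Dgraph.underlying, hxy, hyx]

lemma normHeta_apply {V : Type} [Fintype V] [DecidableEq V] (D : Dgraph V) (η : ℝ) (x y : V) :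
    normHeta D η x y =
      ((1 / Real.sqrt (D.underlying.degree x) : ℝ) : ℂ) * Heta D η x y *
        ((1 / Real.sqrt (D.underlying.degree y) : ℝ) : ℂ) := by
  simp [normHeta, degHalfInv, Matrix.diagonal_mul, Matrix.mul_diagonal]

theorem stmt1_general {V : Type} [Fintype V] [DecidableEq V] (η : ℝ) (D : Dgraph V) :
    normHeta D η =
      bdK D.underlying * shiftStheta D.underlying (etaFun D η) * (bdK D.underlying)ᴴ := by
  ext x y
  rw [normHeta_apply, Heta_apply, bdK_mul_shiftStheta_mul_conjTranspose_apply]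
  split_ifs <;> simp

/-- The normalized `η`-Hermitian adjacency matrix equals the discriminant `K S_θ K*`. -/
theorem stmt1 {V : Type} [Fintype V] [DecidableEq V] (η : ℝ) (D : Dgraph V)
    (hconn : D.underlying.Connected) :
    normHeta D η =
      bdK D.underlying * shiftStheta D.underlying (etaFun D η) * (bdK D.underlying)ᴴ :=
  stmt1_general η D
end

section
/- Let G be a weakly connected k-regular digraph equipped with the (π/2)-function θ, and let H = H_{π/2}(G) be its Hermitian adjacency matrix. Then H has the eigenvalue k with multiplicity at most one and the eigenvalue −k with multiplicity at most one. Moreover: (1) H has eigenvalue k if and only if ℐ(c) ∈ 2πℤ for every closed path c in G^±; and (2) H has eigenvalue −k if and only if either (G^± is bipartite and ℐ(c) ∈ 2πℤ for every closed path c) or (G^± is non-bipartite and for every closed path c, ℐ(c) ∈ 2πℤ when c has even length and ℐ(c) ∈ 2π(ℤ + 1/2) when c has odd length). -/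
open Matrix Polynomial

noncomputable section

variable {V : Type} [Fintype V] [DecidableEq V]

/-!
Let `ε = ±1`. If `H v = ε k v`, then at a vertex `x` where `|v|` is maximal, `k v x` is the sum of
the `k` numbers `ε H_{xy} v y` over the neighbours `y`, each of modulus at most `|v x|`; so all of
them equal `v x`, the maximum spreads to the neighbours, and by connectedness
`v x = ε H_{xy} v y` along every arc. Conversely, by regularity, every such "potential" `v` of the
arc gains `ε H_{xy}` is an eigenvector. A potential is determined by its value at one vertex, which
bounds the multiplicity of `ε k` by one since `H` is Hermitian, and a nonzero potential exists iff
every closed path `c` has total gain `ε^{|c|} e^{iℐ(c)} = 1`. For `ε = -1` this condition splits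
according to the parity of `|c|`, and in a bipartite graph every closed path has even length.
-/

theorem SimpleGraph.Reachable.transport {α : Type*} {G : SimpleGraph α} {P : α → Prop}
    (hP : ∀ x y, G.Adj x y → P x → P y) {x y : α} (h : G.Reachable x y) (hx : P x) : P y := by
  obtain ⟨p⟩ := h
  induction p with
  | nil => exact hx
  | cons hadj _ ih => exact ih (hP _ _ hadj hx)

theorem Matrix.mem_roots_charpoly_iff {n : Type*} [Fintype n] [DecidableEq n] {K : Type*}
    [Field K] (A : Matrix n n K) (μ : K) : μ ∈ A.charpoly.roots ↔ ∃ v ≠ 0, A *ᵥ v = μ • v := by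
  rw [mem_roots A.charpoly_monic.ne_zero, IsRoot, eval_charpoly, ← exists_mulVec_eq_zero_iff]
  have hscalar : ∀ v, scalar n μ *ᵥ v = μ • v := fun v => by ext; simp [mulVec_diagonal]
  simp only [sub_mulVec, hscalar, sub_eq_zero, eq_comm (a := A *ᵥ _)]

theorem Matrix.IsHermitian.count_roots_charpoly_le_one {n : Type*} [Fintype n] [DecidableEq n]
    {A : Matrix n n ℂ} (hA : A.IsHermitian) {μ : ℂ}
    (h : ∀ v w, A *ᵥ v = μ • v → A *ᵥ w = μ • w → v ≠ 0 → ∃ c : ℂ, w = c • v) :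
    A.charpoly.roots.count μ ≤ 1 := by
  by_contra! hlt
  rw [hA.roots_charpoly_eq_eigenvalues, Multiset.count_map, ← Finset.filter_val,
    ← Finset.card_def] at hlt
  obtain ⟨i, hi, j, hj, hij⟩ := Finset.one_lt_card.1 hlt
  simp only [Finset.mem_filter, Finset.mem_univ, true_and, Function.comp_apply] at hi hj
  let b := hA.eigenvectorBasis
  have hb : ∀ l, hA.eigenvalues l = μ → A *ᵥ ⇑(b l) = μ • ⇑(b l) := fun l hl => by
    rw [hA.mulVec_eigenvectorBasis, ← hl, RCLike.real_smul_eq_coe_smul (K := ℂ)]; rfl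
  have hb0 : ∀ l, ⇑(b l) ≠ 0 := fun l h0 => by
    simpa [show b l = 0 from WithLp.ofLp_injective 2 h0] using b.orthonormal.1 l
  obtain ⟨c, hc⟩ := h _ _ (hb i hi.symm) (hb j hj.symm) (hb0 i)
  have hbc : b j = c • b i := WithLp.ofLp_injective 2 (by simpa using hc)
  have horth : inner ℂ (b i) (b j) = 0 := b.orthonormal.2 hij
  rw [hbc, inner_smul_right, inner_self_eq_norm_sq_to_K, b.orthonormal.1 i] at horth
  simp only [RCLike.ofReal_one, one_pow, mul_one] at horth
  exact hb0 j (by simp [hc, horth])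

theorem eq_of_sum_eq_card_nsmul_of_norm_le {E : Type*} [NormedAddCommGroup E]
    [InnerProductSpace ℝ E] {ι : Type*} {s : Finset ι} {u : ι → E} {z : E}
    (hle : ∀ i ∈ s, ‖u i‖ ≤ ‖z‖) (hsum : ∑ i ∈ s, u i = s.card • z) : ∀ i ∈ s, u i = z := by
  have hsq : ∑ i ∈ s, ‖u i - z‖ ^ 2 ≤ 0 := calc
    ∑ i ∈ s, ‖u i - z‖ ^ 2 = ∑ i ∈ s, ‖u i‖ ^ 2 - 2 * inner ℝ (∑ i ∈ s, u i) z
        + s.card * ‖z‖ ^ 2 := by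
      simp only [norm_sub_sq_real, Finset.sum_add_distrib, Finset.sum_sub_distrib, sum_inner,
        Finset.mul_sum, Finset.sum_const, nsmul_eq_mul]
    _ = ∑ i ∈ s, ‖u i‖ ^ 2 - s.card * ‖z‖ ^ 2 := by
      rw [hsum, inner_smul_left_eq_smul, real_inner_self_eq_norm_sq, nsmul_eq_mul]; ring
    _ ≤ 0 := by
      rw [sub_nonpos, ← nsmul_eq_mul, ← Finset.sum_const]
      exact Finset.sum_le_sum fun i hi => pow_le_pow_left₀ (norm_nonneg _) (hle i hi) 2
  intro i hi
  have := (Finset.sum_eq_zero_iff_of_nonneg fun i _ => sq_nonneg ‖u i - z‖).1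
    (le_antisymm hsq (Finset.sum_nonneg fun i _ => sq_nonneg _)) i hi
  simpa [sub_eq_zero] using this

section Potential

variable {G : SimpleGraph V}

def dartArc (d : G.Dart) : GArc G := ⟨d.toProd, d.adj⟩

def IsPotential (f : GArc G → ℂ) (v : V → ℂ) : Prop :=
  ∀ a : GArc G, v (arcO a) = f a * v (arcT a)

def walkGain (f : GArc G → ℂ) {x y : V} (p : G.Walk x y) : ℂ :=
  ((p.darts.map dartArc).map f).prod

def ClosedPath.ofWalk {x : V} (p : G.Walk x x) (hp : ¬p.Nil) : ClosedPath G where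
  arcs := p.darts.map dartArc
  ne := by simpa [SimpleGraph.Walk.darts_eq_nil] using hp
  chain := (List.isChain_map _).2 (p.isChain_dartAdj_darts.imp fun _ _ h => h)
  closed := by
    rw [List.getLast_map, List.head_map]
    simp [dartArc, arcT, arcO, p.getLast_darts_eq_lastDart, p.head_darts_eq_firstDart]

omit [Fintype V] [DecidableEq V]

variable {f : GArc G → ℂ} {v w : V → ℂ}

theorem walkGain_cons {x y z : V} (h : G.Adj x y) (p : G.Walk y z) :
    walkGain f (.cons h p) = f ⟨(x, y), h⟩ * walkGain f p := rfl

theorem walkGain_append {x y z : V} (p : G.Walk x y) (q : G.Walk y z) :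
    walkGain f (p.append q) = walkGain f p * walkGain f q := by
  simp [walkGain, SimpleGraph.Walk.darts_append]

theorem walkGain_eq_one_of_closed (hf : ∀ c : ClosedPath G, (c.arcs.map f).prod = 1) {x : V}
    (p : G.Walk x x) : walkGain f p = 1 := by
  by_cases hp : p.Nil
  · simp [hp.eq_nil, walkGain]
  · exact hf (.ofWalk p hp)

theorem walkGain_eq_walkGain (hf : ∀ c : ClosedPath G, (c.arcs.map f).prod = 1) {x y : V}
    (p q : G.Walk x y) : walkGain f p = walkGain f q := calc
  walkGain f p = walkGain f p * walkGain f (q.reverse.append q) := by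
    rw [walkGain_eq_one_of_closed hf, mul_one]
  _ = walkGain f (p.append q.reverse) * walkGain f q := by
    rw [walkGain_append, walkGain_append, mul_assoc]
  _ = walkGain f q := by rw [walkGain_eq_one_of_closed hf, one_mul]

theorem exists_isPotential (hG : G.Connected)
    (hf : ∀ c : ClosedPath G, (c.arcs.map f).prod = 1) : ∃ v, v ≠ 0 ∧ IsPotential f v := by
  obtain ⟨x₀⟩ := hG.nonempty
  let v x := walkGain f (hG.preconnected x x₀).some
  refine ⟨v, fun h0 => ?_, fun a => ?_⟩
  · have hv : v x₀ = 1 := walkGain_eq_walkGain hf _ .nil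
    simp [h0] at hv
  · obtain ⟨⟨x, y⟩, hxy⟩ := a
    exact (walkGain_eq_walkGain hf _ (.cons hxy (hG.preconnected y x₀).some)).trans
      (walkGain_cons hxy _)

theorem IsPotential.apply_ne_zero (hv : IsPotential f v) (hG : G.Connected) (hv0 : v ≠ 0)
    (x : V) : v x ≠ 0 := by
  intro hx
  refine hv0 (funext fun y =>
    (hG.preconnected x y).transport (P := (v · = 0)) (fun a b hab ha => ?_) hx)
  exact (hv ⟨(b, a), hab.symm⟩).trans (by simp [arcT, ha])

theorem IsPotential.apply_arcO_head (hv : IsPotential f v) :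
    ∀ (l : List (GArc G)) (hl : l ≠ []), l.IsChain (fun a b => arcT a = arcO b) →
      v (arcO (l.head hl)) = (l.map f).prod * v (arcT (l.getLast hl))
  | [a], _, _ => by simpa using hv a
  | a :: b :: l, _, hch => by
    rw [List.isChain_cons_cons] at hch
    rw [List.head_cons, List.getLast_cons (List.cons_ne_nil b l), List.map_cons, List.prod_cons,
      mul_assoc, ← hv.apply_arcO_head (b :: l) (List.cons_ne_nil b l) hch.2, List.head_cons,
      ← hch.1, hv a]

theorem IsPotential.prod_map_eq_one (hv : IsPotential f v) (hv0 : ∀ x, v x ≠ 0)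
    (c : ClosedPath G) : (c.arcs.map f).prod = 1 := by
  have h := hv.apply_arcO_head c.arcs c.ne c.chain
  rw [c.closed] at h
  exact (mul_eq_right₀ (hv0 _)).1 h.symm

theorem IsPotential.eq_smul (hv : IsPotential f v) (hw : IsPotential f w) (hG : G.Connected)
    (hv0 : ∀ x, v x ≠ 0) : ∃ c : ℂ, w = c • v := by
  obtain ⟨x₀⟩ := hG.nonempty
  refine ⟨w x₀ / v x₀, funext fun x => ?_⟩
  have hx : w x * v x₀ = w x₀ * v x := by
    refine (hG.preconnected x₀ x).transport (P := fun y => w y * v x₀ = w x₀ * v y)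
      (fun a b hab ha => ?_) rfl
    have hvb : v b = f ⟨(b, a), hab.symm⟩ * v a := hv ⟨(b, a), hab.symm⟩
    have hwb : w b = f ⟨(b, a), hab.symm⟩ * w a := hw ⟨(b, a), hab.symm⟩
    rw [hvb, hwb]
    linear_combination f ⟨(b, a), hab.symm⟩ * ha
  rw [Pi.smul_apply, smul_eq_mul, div_mul_eq_mul_div, eq_div_iff (hv0 x₀), hx]

theorem ClosedPath.even_length_of_colorable (hcol : G.Colorable 2) (c : ClosedPath G) :
    Even c.arcs.length := by
  obtain ⟨C⟩ := hcol
  have hv : IsPotential (fun _ => -1) fun x => (-1 : ℂ) ^ (C x : ℕ) := fun a => by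
    have hne : C (arcO a) ≠ C (arcT a) := C.valid a.2
    show (-1 : ℂ) ^ (C (arcO a) : ℕ) = -1 * (-1) ^ (C (arcT a) : ℕ)
    generalize C (arcO a) = i, C (arcT a) = j at hne ⊢
    fin_cases i <;> fin_cases j <;> simp_all
  have h := hv.prod_map_eq_one (fun x => by simp) c
  rwa [List.map_const', List.prod_replicate, neg_one_pow_eq_one_iff_even (by norm_num)] at h

end Potential

section Heta

variable (D : Dgraph V) (η : ℝ)

omit [Fintype V] [DecidableEq V]

theorem Heta_arcO_arcT (a : GArc D.underlying) :
    Heta D η (arcO a) (arcT a) = Complex.exp (etaFun D η a * Complex.I) := by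
  obtain ⟨⟨x, y⟩, hxy | hyx⟩ := a <;>
    by_cases h₁ : D.Adj x y <;> by_cases h₂ : D.Adj y x <;>
    simp_all [Heta, etaFun, arcO, arcT, neg_mul]

theorem Heta_apply_eq_zero {x y : V} (h : ¬D.underlying.Adj x y) : Heta D η x y = 0 := by
  simp only [Dgraph.underlying, not_or] at h
  simp [Heta, h.1, h.2]

theorem Heta_isHermitian : (Heta D η).IsHermitian := by
  ext x y
  by_cases h₁ : D.Adj x y <;> by_cases h₂ : D.Adj y x <;>
    simp [Heta, h₁, h₂, ← Complex.exp_conj, Complex.conj_ofReal]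

theorem norm_Heta_apply {x y : V} (h : D.underlying.Adj x y) : ‖Heta D η x y‖ = 1 := by
  simpa [arcO, arcT] using congrArg norm (Heta_arcO_arcT D η ⟨(x, y), h⟩)

end Heta

section Eigen

def hermGain (D : Dgraph V) (η : ℝ) (ε : ℂ) (a : GArc D.underlying) : ℂ :=
  ε * Heta D η (arcO a) (arcT a)

variable {D : Dgraph V} {η : ℝ} {k : ℕ} {ε : ℂ} {v : V → ℂ}

omit [Fintype V] [DecidableEq V] in
theorem prod_map_hermGain (l : List (GArc D.underlying)) :
    (l.map (hermGain D η ε)).prod =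
      ε ^ l.length * Complex.exp ((l.map (etaFun D η)).sum * Complex.I) := by
  induction l with
  | nil => simp
  | cons a l ih =>
    simp only [List.map_cons, List.prod_cons, List.sum_cons, List.length_cons, ih, hermGain,
      Heta_arcO_arcT, pow_succ, Complex.ofReal_add, add_mul, Complex.exp_add]
    ring

omit [DecidableEq V] in
theorem Heta_mulVec_apply (v : V → ℂ) (x : V) :
    (Heta D η *ᵥ v) x = ∑ y ∈ D.underlying.neighborFinset x, Heta D η x y * v y := by
  refine (Finset.sum_subset (Finset.subset_univ _) fun y _ hy => ?_).symm
  rw [SimpleGraph.mem_neighborFinset] at hy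
  simp only [Heta_apply_eq_zero D η hy, zero_mul]

omit [DecidableEq V] in
theorem isPotential_of_Heta_mulVec_eq (hconn : D.underlying.Connected)
    (hreg : ∀ x, D.underlying.degree x = k) (hε : ε ^ 2 = 1)
    (hv : Heta D η *ᵥ v = (ε * k) • v) :
    IsPotential (hermGain D η ε) v := by
  have hεn : ‖ε‖ = 1 :=
    (pow_eq_one_iff_of_nonneg (norm_nonneg ε) two_ne_zero).1 (by rw [← norm_pow, hε, norm_one])
  have : Nonempty V := hconn.nonempty
  obtain ⟨x₀, -, hmax⟩ := Finset.exists_max_image Finset.univ (‖v ·‖) Finset.univ_nonempty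
  have hnorm_le : ∀ x, ‖v x‖ ≤ ‖v x₀‖ := fun x => hmax x (Finset.mem_univ x)
  have hstep : ∀ x, ‖v x‖ = ‖v x₀‖ → ∀ y, D.underlying.Adj x y →
      ε * Heta D η x y * v y = v x := by
    intro x hx y hxy
    refine eq_of_sum_eq_card_nsmul_of_norm_le (u := fun y => ε * Heta D η x y * v y)
      (fun y hy => ?_) ?_ y
      ((SimpleGraph.mem_neighborFinset _ _ _).2 hxy)
    · rw [SimpleGraph.mem_neighborFinset] at hy
      rw [norm_mul, norm_mul, hεn, norm_Heta_apply D η hy, one_mul, one_mul, hx]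
      exact hnorm_le y
    · simp_rw [mul_assoc, ← Finset.mul_sum, ← Heta_mulVec_apply, hv, Pi.smul_apply, smul_eq_mul,
        ← mul_assoc, ← sq, hε, one_mul, SimpleGraph.card_neighborFinset_eq_degree, hreg,
        nsmul_eq_mul]
  have hnorm : ∀ x, ‖v x‖ = ‖v x₀‖ := fun x =>
    (hconn.preconnected x₀ x).transport (P := (‖v ·‖ = ‖v x₀‖))
      (fun a b hab ha => by rw [← ha, ← hstep a ha b hab, norm_mul, norm_mul, hεn,
        norm_Heta_apply D η hab, one_mul, one_mul]) rfl
  exact fun a => (hstep _ (hnorm _) _ a.2).symm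

omit [DecidableEq V] in
theorem Heta_mulVec_eq_of_isPotential (hreg : ∀ x, D.underlying.degree x = k) (hε : ε ^ 2 = 1)
    (hv : IsPotential (hermGain D η ε) v) :
    Heta D η *ᵥ v = (ε * k) • v := by
  funext x
  have hterm : ∀ y ∈ D.underlying.neighborFinset x, Heta D η x y * v y = ε * v x := by
    intro y hy
    have hvx : v x = ε * Heta D η x y * v y :=
      hv ⟨(x, y), (SimpleGraph.mem_neighborFinset _ _ _).1 hy⟩
    rw [hvx]
    linear_combination (-(Heta D η x y * v y)) * hε
  rw [Heta_mulVec_apply, Finset.sum_congr rfl hterm, Finset.sum_const,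
    SimpleGraph.card_neighborFinset_eq_degree, hreg, Pi.smul_apply, smul_eq_mul, nsmul_eq_mul]
  ring

theorem mem_roots_charpoly_Heta_iff (hconn : D.underlying.Connected)
    (hreg : ∀ x, D.underlying.degree x = k) (hε : ε ^ 2 = 1) :
    ε * k ∈ (Heta D η).charpoly.roots ↔
      ∀ c : ClosedPath D.underlying,
        ε ^ c.arcs.length * Complex.exp (pathSum (etaFun D η) c * Complex.I) = 1 := by
  rw [Matrix.mem_roots_charpoly_iff]
  constructor
  · rintro ⟨v, hv0, hv⟩ c
    have hp := isPotential_of_Heta_mulVec_eq hconn hreg hε hv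
    exact (prod_map_hermGain c.arcs).symm.trans
      (hp.prod_map_eq_one (hp.apply_ne_zero hconn hv0) c)
  · intro hc
    obtain ⟨v, hv0, hp⟩ :=
      exists_isPotential hconn fun c => (prod_map_hermGain c.arcs).trans (hc c)
    exact ⟨v, hv0, Heta_mulVec_eq_of_isPotential hreg hε hp⟩

theorem count_roots_charpoly_Heta_le_one (hconn : D.underlying.Connected)
    (hreg : ∀ x, D.underlying.degree x = k) (hε : ε ^ 2 = 1) :
    (Heta D η).charpoly.roots.count (ε * k) ≤ 1 :=
  (Heta_isHermitian D η).count_roots_charpoly_le_one fun _ _ hv hw hv0 =>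
    let hpv := isPotential_of_Heta_mulVec_eq hconn hreg hε hv
    hpv.eq_smul (isPotential_of_Heta_mulVec_eq hconn hreg hε hw) hconn
      (hpv.apply_ne_zero hconn hv0)

end Eigen

theorem exp_ofReal_mul_I_eq_one_iff (x : ℝ) : Complex.exp (x * Complex.I) = 1 ↔ in2piZ x := by
  rw [Complex.exp_eq_one_iff]
  refine exists_congr fun m => ⟨fun h => ?_, fun h => by rw [h]; push_cast; ring⟩
  simpa [mul_comm] using congrArg Complex.im h

theorem exp_ofReal_mul_I_eq_neg_one_iff (x : ℝ) :
    Complex.exp (x * Complex.I) = -1 ↔ in2piZhalf x := by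
  rw [← Complex.exp_pi_mul_I, Complex.exp_eq_exp_iff_exists_int]
  refine exists_congr fun m => ⟨fun h => ?_, fun h => by rw [h]; push_cast; ring⟩
  have him : x = Real.pi + m * (2 * Real.pi) := by simpa using congrArg Complex.im h
  rw [him]
  ring

theorem neg_one_pow_mul_eq_one_iff {R : Type*} [Ring R] {n : ℕ} {z : R} :
    (-1) ^ n * z = 1 ↔ (Even n → z = 1) ∧ (Odd n → z = -1) := by
  rcases n.even_or_odd with hn | hn
  · simp [hn.neg_one_pow, hn, ← Nat.not_even_iff_odd]
  · simp [hn.neg_one_pow, hn, ← Nat.not_odd_iff_even, neg_eq_iff_eq_neg]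

/-- A weakly connected `k`-regular digraph has each of `±k` as an eigenvalue of its Hermitian
adjacency matrix `H = H_{π/2}` with multiplicity at most one; `k` is an eigenvalue iff
`ℐ(c) ∈ 2πℤ` for every closed path, and `−k` is an eigenvalue iff the graph is in case (i)
or case (iii). -/
theorem stmt6 {V : Type} [Fintype V] [DecidableEq V] (k : ℕ) (D : Dgraph V)
    (hconn : D.underlying.Connected) (hreg : ∀ v, D.underlying.degree v = k) :
    let H := Heta D (Real.pi / 2)
    let θ := etaFun D (Real.pi / 2)
    let allInt : Prop := ∀ c : ClosedPath D.underlying, in2piZ (pathSum θ c)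
    let parity : Prop := ∀ c : ClosedPath D.underlying,
      (Even c.arcs.length → in2piZ (pathSum θ c)) ∧
      (Odd c.arcs.length → in2piZhalf (pathSum θ c))
    H.charpoly.roots.count (k : ℂ) ≤ 1 ∧
    H.charpoly.roots.count (-(k : ℂ)) ≤ 1 ∧
    ((k : ℂ) ∈ H.charpoly.roots ↔ allInt) ∧
    ((-(k : ℂ)) ∈ H.charpoly.roots ↔
      ((D.underlying.Colorable 2 ∧ allInt) ∨ (¬D.underlying.Colorable 2 ∧ parity))) := by
  intro H θ allInt parity
  have hmem := fun ε => mem_roots_charpoly_Heta_iff (η := Real.pi / 2) (ε := ε) hconn hreg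
  have hcount := fun ε => count_roots_charpoly_Heta_le_one (η := Real.pi / 2) (ε := ε) hconn hreg
  have hk : (k : ℂ) ∈ H.charpoly.roots ↔ allInt := by
    simpa [exp_ofReal_mul_I_eq_one_iff] using hmem 1 (one_pow 2)
  have hnegk : (-(k : ℂ)) ∈ H.charpoly.roots ↔ parity := by
    simpa [neg_one_pow_mul_eq_one_iff, exp_ofReal_mul_I_eq_one_iff,
      exp_ofReal_mul_I_eq_neg_one_iff] using hmem (-1) (by norm_num)
  refine ⟨by simpa using hcount 1 (one_pow 2), by simpa using hcount (-1) (by norm_num), hk, ?_⟩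
  rw [hnegk]
  by_cases hcol : D.underlying.Colorable 2
  · have heven := ClosedPath.even_length_of_colorable hcol
    simp only [hcol, true_and, not_true_eq_false, false_and, or_false, parity, allInt]
    exact forall_congr' fun c => by simp [heven c, Nat.not_odd_iff_even.2 (heven c)]
  · simp [hcol]
end
end

section
/- Fix η ∈ ℝ. Let G be a digraph and S ⊆ V(G) a subset such that every arc in δ(S) = {(x,y) ∈ A(G) : |{x,y} ∩ S| = 1} lies in a digon. Let G' be the digraph obtained from G by replacing each digon {x,y} with x ∉ S and y ∈ S by the single arc (x,y). Then H_η(G) and H_η(G') have the same spectrum (the same characteristic polynomial). -/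
open Matrix Polynomial

noncomputable section

variable {V : Type} [Fintype V] [DecidableEq V]

/-!
Conjugating by the diagonal matrix that is `e^{-iη}` on `S` and `1` off `S` multiplies the entry
`(x, y)` of `H_η` by `e^{iη}` when `x ∉ S ∋ y`, by `e^{-iη}` when `x ∈ S ∌ y`, and leaves it
unchanged otherwise. Since every arc between `S` and its complement lies in a digon, whose entries
are `1`, this turns `H_η(G)` into exactly `H_η(G')`; a diagonal similarity preserves the
characteristic polynomial.
-/

theorem Matrix.charpoly_diagonal_mul_mul_diagonal {n R : Type*} [Fintype n] [DecidableEq n]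
    [CommRing R] (p q : n → R) (hqp : ∀ i, q i * p i = 1) (M : Matrix n n R) :
    (diagonal p * M * diagonal q).charpoly = M.charpoly := by
  rw [charpoly_mul_comm, ← mul_assoc, diagonal_mul_diagonal,
    show (fun i => q i * p i) = fun _ => 1 from funext hqp, diagonal_one, one_mul]

namespace Dgraph

variable {D D' : Dgraph V} {η : ℝ} {S : Finset V}

section Entries

omit [Fintype V] [DecidableEq V]

variable {x y : V}

theorem Heta_apply_eq_of_adj_iff (hxy : D'.Adj x y ↔ D.Adj x y) (hyx : D'.Adj y x ↔ D.Adj y x) :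
    Heta D' η x y = Heta D η x y := by
  simp only [Heta, hxy, hyx]

theorem Heta_apply_of_digon_to_arc (hxy : D.Adj x y) (hyx : D.Adj y x) (hxy' : D'.Adj x y)
    (hyx' : ¬D'.Adj y x) :
    Heta D' η x y = Complex.exp (η * Complex.I) * Heta D η x y ∧
      Heta D' η y x = Complex.exp (-η * Complex.I) * Heta D η y x := by
  simp [Heta, hxy, hyx, hxy', hyx']

theorem Heta_apply_of_mem_iff_mem
    (hD' : ∀ u v, D'.Adj u v ↔ (D.Adj u v ∧ ¬(u ∈ S ∧ v ∉ S ∧ D.Adj v u)))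
    (hS : x ∈ S ↔ y ∈ S) : Heta D' η x y = Heta D η x y := by
  apply Heta_apply_eq_of_adj_iff <;> simp only [hD', hS] <;> tauto

theorem Heta_apply_of_notMem_of_mem
    (hdelta : ∀ x y, D.Adj x y → ((x ∈ S ∧ y ∉ S) ∨ (x ∉ S ∧ y ∈ S)) → D.Adj y x)
    (hD' : ∀ u v, D'.Adj u v ↔ (D.Adj u v ∧ ¬(u ∈ S ∧ v ∉ S ∧ D.Adj v u)))
    (hx : x ∉ S) (hy : y ∈ S) :
    Heta D' η x y = Complex.exp (η * Complex.I) * Heta D η x y ∧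
      Heta D' η y x = Complex.exp (-η * Complex.I) * Heta D η y x := by
  by_cases hcross : D.Adj x y ∨ D.Adj y x
  · have hxy : D.Adj x y := hcross.elim id fun hyx => hdelta y x hyx (.inl ⟨hy, hx⟩)
    have hyx : D.Adj y x := hdelta x y hxy (.inr ⟨hx, hy⟩)
    exact Heta_apply_of_digon_to_arc hxy hyx ((hD' x y).2 ⟨hxy, fun h => hx h.1⟩)
      fun h => ((hD' y x).1 h).2 ⟨hy, hx, hxy⟩
  · push Not at hcross
    have hxy' : ¬D'.Adj x y := fun h => hcross.1 ((hD' x y).1 h).1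
    have hyx' : ¬D'.Adj y x := fun h => hcross.2 ((hD' y x).1 h).1
    simp [Heta, hcross.1, hcross.2, hxy', hyx']

end Entries

theorem Heta_eq_diagonal_mul_mul_diagonal
    (hdelta : ∀ x y, D.Adj x y → ((x ∈ S ∧ y ∉ S) ∨ (x ∉ S ∧ y ∈ S)) → D.Adj y x)
    (hD' : ∀ u v, D'.Adj u v ↔ (D.Adj u v ∧ ¬(u ∈ S ∧ v ∉ S ∧ D.Adj v u))) :
    Heta D' η = diagonal (fun x => if x ∈ S then Complex.exp (-η * Complex.I) else 1) *
      Heta D η * diagonal (fun x => if x ∈ S then Complex.exp (η * Complex.I) else 1) := by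
  have hexp : Complex.exp (-η * Complex.I) * Complex.exp (η * Complex.I) = 1 := by
    rw [← Complex.exp_add, neg_mul, neg_add_cancel, Complex.exp_zero]
  ext x y
  rw [mul_diagonal, diagonal_mul]
  by_cases hx : x ∈ S <;> by_cases hy : y ∈ S <;> simp only [hx, hy, if_true, if_false]
  · rw [Heta_apply_of_mem_iff_mem hD' (iff_of_true hx hy)]
    linear_combination (-Heta D η x y) * hexp
  · rw [(Heta_apply_of_notMem_of_mem hdelta hD' hy hx).2, mul_one]
  · rw [(Heta_apply_of_notMem_of_mem hdelta hD' hx hy).1, one_mul, mul_comm]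
  · rw [Heta_apply_of_mem_iff_mem hD' (iff_of_false hx hy), one_mul, mul_one]

end Dgraph

/-- If every arc of `δ(S)` lies in a digon, then replacing each digon `{x,y}` crossing `S`
(with `x ∉ S`, `y ∈ S`) by the single arc `(x,y)` preserves the `H_η`-spectrum. -/
theorem stmt7 {V : Type} [Fintype V] [DecidableEq V] (η : ℝ) (D D' : Dgraph V)
    (S : Finset V)
    (hdelta : ∀ x y, D.Adj x y → ((x ∈ S ∧ y ∉ S) ∨ (x ∉ S ∧ y ∈ S)) → D.Adj y x)
    (hD' : ∀ u v, D'.Adj u v ↔ (D.Adj u v ∧ ¬(u ∈ S ∧ v ∉ S ∧ D.Adj v u))) :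
    (Heta D η).charpoly = (Heta D' η).charpoly := by
  rw [Dgraph.Heta_eq_diagonal_mul_mul_diagonal hdelta hD',
    Matrix.charpoly_diagonal_mul_mul_diagonal]
  intro x
  split_ifs
  · rw [← Complex.exp_add, neg_mul, add_neg_cancel, Complex.exp_zero]
  · exact one_mul 1
end
end

section
/- Suppose n ≥ 3 and let a ∈ {0,1,…,n−1}. Let G = Y_{a,n−a} be equipped with an η-function θ, and let U_θ be its transfer matrix. Then the multiset of eigenvalues of U_θ is {1 with multiplicity n(n−1)/2 − n + 2, −1 with multiplicity n(n−1)/2 − n, together with, for each of the n−1 copies of the value −1/(n−1), the two solutions z on the unit circle of (z+z⁻¹)/2 = −1/(n−1)}. In particular, all digraphs Y_{a,n−a} (a = 0,…,n−1) have the same U_θ-spectrum as the complete graph K_n. -/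
open Matrix Polynomial

/-!
On `Y_{a,n-a}` the `η`-function is the coboundary `θ(b) = g(t b) - g(o b)` of
`g = η · 𝟙_{[n] ∖ [a]}`, so `U_θ = D U D⁻¹` for a diagonal gauge matrix `D`, and `U_θ` has the
spectrum of the Grover matrix `U = S C` of the underlying graph, which is `K_n` for every `a`.
Since `S² = 1`, `l - U = (l + S)(1 - 2 (l² - 1)⁻¹ (l - S) S K* K)`, and the Weinstein–Aronszajn
identity reduces `det (l - U)` to `(l² - 1)^|E|` times a determinant on the vertex space built from
`K K*` and `K S K*`. For `K_n` these are `1` and `(J - 1)/(n - 1)`, so that determinant is explicit.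
-/

open Finset

section Arcs

variable {V : Type} {G : SimpleGraph V}

@[simp] lemma arcInv_arcInv (a : GArc G) : arcInv (arcInv a) = a := rfl

@[simp] lemma arcO_arcInv (a : GArc G) : arcO (arcInv a) = arcT a := rfl

@[simp] lemma arcT_arcInv (a : GArc G) : arcT (arcInv a) = arcO a := rfl

lemma arcO_ne_arcT (a : GArc G) : arcO a ≠ arcT a := G.ne_of_adj a.2

variable (G) in
def garcEquivDart : GArc G ≃ G.Dart where
  toFun a := ⟨a.1, a.2⟩
  invFun d := ⟨d.toProd, d.adj⟩
  left_inv _ := rfl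
  right_inv _ := rfl

variable (G) [Fintype V] [DecidableRel G.Adj] in
lemma card_garc : Fintype.card (GArc G) = 2 * #G.edgeFinset := by
  rw [Fintype.card_congr (garcEquivDart G), G.dart_card_eq_twice_card_edges]

end Arcs

section Shift

variable {V : Type} [Fintype V] (G : SimpleGraph V)

noncomputable def arcSign (a : GArc G) : ℂ :=
  if Fintype.equivFin V (arcO a) < Fintype.equivFin V (arcT a) then 1 else -1

lemma arcSign_mul_self (a : GArc G) : arcSign G a * arcSign G a = 1 := by
  unfold arcSign; split_ifs <;> norm_num

lemma arcSign_arcInv (a : GArc G) : arcSign G (arcInv a) = -arcSign G a := by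
  have h : Fintype.equivFin V (arcO a) ≠ Fintype.equivFin V (arcT a) :=
    (Fintype.equivFin V).injective.ne (arcO_ne_arcT a)
  unfold arcSign
  rw [arcO_arcInv, arcT_arcInv]
  rcases h.lt_or_gt with h | h
  · rw [if_neg h.asymm, if_pos h]
  · rw [if_pos h, if_neg h.asymm, neg_neg]

variable [DecidableEq V] [DecidableRel G.Adj]

lemma mul_shiftS_apply {ι : Type} (M : Matrix ι (GArc G) ℂ) (i : ι) (b : GArc G) :
    (M * shiftS G) i b = M i (arcInv b) := by
  rw [mul_apply, Finset.sum_eq_single (arcInv b)] <;> intros <;> simp_all [shiftS]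

lemma shiftS_mul_shiftS : shiftS G * shiftS G = 1 := by
  ext a b
  rw [mul_shiftS_apply]
  by_cases h : a = b
  · subst h; simp [shiftS]
  · simp [shiftS, h, one_apply_ne h]

lemma diagonal_arcSign_conj :
    diagonal (arcSign G) * shiftS G * diagonal (arcSign G) = -shiftS G := by
  ext a b
  rw [mul_diagonal, diagonal_mul, neg_apply]
  by_cases h : a = arcInv b
  · subst h
    simp [shiftS, arcSign_arcInv, arcSign_mul_self]
  · simp [shiftS, h]

lemma smul_one_add_shiftS_mul_smul_one_sub_shiftS (l : ℂ) :
    (l • 1 + shiftS G) * (l • 1 - shiftS G) = (l ^ 2 - 1) • (1 : Matrix (GArc G) (GArc G) ℂ) := by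
  simp only [add_mul, mul_sub, Matrix.smul_mul, Matrix.mul_smul, one_mul, mul_one,
    shiftS_mul_shiftS]
  module

/-- Conjugation by `arcSign` gives `det (l + S) = det (l - S)`, and their product is
`(l² - 1) ^ #arcs`; both sides are monic in `l`, so no sign is lost in taking the square root. -/
lemma det_smul_one_add_shiftS (l : ℂ) :
    (l • 1 + shiftS G).det = (l ^ 2 - 1) ^ #G.edgeFinset := by
  have hflip (t : ℂ) : (t • 1 + shiftS G).det = (t • 1 - shiftS G).det := by
    have hsq : diagonal (arcSign G) * diagonal (arcSign G) = 1 := by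
      rw [diagonal_mul_diagonal, funext (arcSign_mul_self G), diagonal_one]
    have hconj : diagonal (arcSign G) * (t • 1 - shiftS G) * diagonal (arcSign G)
        = t • 1 + shiftS G := by
      rw [mul_sub, sub_mul, diagonal_arcSign_conj, Matrix.mul_smul, mul_one, Matrix.smul_mul, hsq]
      abel
    rw [← hconj, det_mul, det_mul, mul_comm, ← mul_assoc, ← det_mul, hsq, det_one, one_mul]
  have hq (t : ℂ) : (-shiftS G).charpoly.eval t = (t • 1 + shiftS G).det := by
    rw [eval_charpoly, scalar_apply, ← smul_one_eq_diagonal, sub_neg_eq_add]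
  have hsq : (-shiftS G).charpoly ^ 2 = ((X ^ 2 - 1 : ℂ[X]) ^ #G.edgeFinset) ^ 2 := by
    refine Polynomial.funext fun t => ?_
    have h := congrArg det (smul_one_add_shiftS_mul_smul_one_sub_shiftS G t)
    rw [det_mul, ← hflip, det_smul, det_one, mul_one, card_garc] at h
    simp only [eval_pow, hq, eval_sub, eval_X, eval_one]
    rw [sq, h, pow_mul']
  have hmonic : ((X ^ 2 - 1 : ℂ[X]) ^ #G.edgeFinset).Monic :=
    ((monic_X_pow 2).sub_of_left (by rw [degree_one, degree_X_pow]; norm_num)).pow _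
  rcases sq_eq_sq_iff_eq_or_eq_neg.mp hsq with h | h
  · rw [← hq, h, eval_pow, eval_sub, eval_pow, eval_X, eval_one]
  · have := congrArg leadingCoeff h
    rw [(charpoly_monic _).leadingCoeff, leadingCoeff_neg, hmonic.leadingCoeff] at this
    norm_num at this

end Shift

section Gauge

variable {V : Type} [Fintype V] [DecidableEq V] (G : SimpleGraph V) [DecidableRel G.Adj]

lemma conjTranspose_bdK_mul_bdK_apply_of_ne {a b : GArc G} (h : arcT a ≠ arcT b) :
    ((bdK G)ᴴ * bdK G) a b = 0 := by
  refine Finset.sum_eq_zero fun v _ => ?_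
  by_cases hv : v = arcT a
  · simp [bdK, hv, h]
  · simp [bdK, hv]

lemma coinC_mul_diagonal_comp_arcT (f : V → ℂ) :
    coinC G * diagonal (fun a => f (arcT a)) = diagonal (fun a => f (arcT a)) * coinC G := by
  ext a b
  rw [mul_diagonal, diagonal_mul]
  by_cases h : arcT a = arcT b
  · rw [h, mul_comm]
  · have hab : a ≠ b := fun e => h (congrArg arcT e)
    simp [coinC, conjTranspose_bdK_mul_bdK_apply_of_ne G h, one_apply_ne hab]

lemma shiftStheta_eq_of_eq_sub {θ : GArc G → ℝ} {g : V → ℝ}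
    (hθ : ∀ b, θ b = g (arcT b) - g (arcO b)) :
    shiftStheta G θ = diagonal (fun a => Complex.exp (-(g (arcT a) : ℂ) * Complex.I))
      * shiftS G * diagonal (fun a => Complex.exp ((g (arcT a) : ℂ) * Complex.I)) := by
  ext a b
  rw [mul_diagonal, diagonal_mul]
  by_cases h : a = arcInv b
  · subst h
    simp only [shiftStheta, shiftS, if_true, hθ, arcT_arcInv, mul_one, ← Complex.exp_add]
    push_cast
    congr 1
    ring
  · simp [shiftStheta, shiftS, h]

theorem charpoly_transferU_of_eq_sub {θ : GArc G → ℝ} (g : V → ℝ)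
    (hθ : ∀ b, θ b = g (arcT b) - g (arcO b)) :
    (transferU G θ).charpoly = (groverU G).charpoly := by
  have hinv : diagonal (fun a => Complex.exp ((g (arcT a) : ℂ) * Complex.I))
      * diagonal (fun a : GArc G => Complex.exp (-(g (arcT a) : ℂ) * Complex.I)) = 1 := by
    rw [diagonal_mul_diagonal, ← diagonal_one]
    congr 1
    funext a
    rw [← Complex.exp_add, neg_mul, add_neg_cancel, Complex.exp_zero]
  rw [transferU, groverU, shiftStheta_eq_of_eq_sub G hθ, mul_assoc, mul_assoc,
    ← coinC_mul_diagonal_comp_arcT G (fun v => Complex.exp ((g v : ℂ) * Complex.I)),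
    charpoly_mul_comm, mul_assoc, mul_assoc, hinv, mul_one]

end Gauge

section Boundary

variable {V : Type} [Fintype V] (G : SimpleGraph V) [DecidableRel G.Adj]

noncomputable def invSqrtDeg (v : V) : ℂ := ((1 / Real.sqrt (G.degree v) : ℝ) : ℂ)

lemma invSqrtDeg_mul_self (v : V) : invSqrtDeg G v * invSqrtDeg G v = (G.degree v : ℂ)⁻¹ := by
  rw [invSqrtDeg, ← Complex.ofReal_mul, div_mul_div_comm, one_mul,
    Real.mul_self_sqrt (Nat.cast_nonneg _), one_div, Complex.ofReal_inv, Complex.ofReal_natCast]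

variable [DecidableEq V]

lemma bdK_eq_diagonal_mul_Ft : bdK G = diagonal (invSqrtDeg G) * Ft G := by
  ext v a
  by_cases h : v = arcT a <;> simp [bdK, Ft, invSqrtDeg, h]

lemma conjTranspose_bdK : (bdK G)ᴴ = (Ft G)ᴴ * diagonal (invSqrtDeg G) := by
  rw [bdK_eq_diagonal_mul_Ft, conjTranspose_mul, diagonal_conjTranspose]
  congr
  funext v
  exact Complex.conj_ofReal _

lemma Ft_mul_shiftS : Ft G * shiftS G = Fo G := by
  ext v b
  rw [mul_shiftS_apply]
  rfl

lemma card_filter_arcT_eq_degree (v : V) : #{a : GArc G | arcT a = v} = G.degree v := by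
  rw [← G.dart_fst_fiber_card_eq_degree v]
  exact card_equiv ((Function.Involutive.toPerm arcInv arcInv_arcInv).trans (garcEquivDart G))
    (fun a => by simp only [Finset.mem_filter, Finset.mem_univ, true_and]; rfl)

lemma Ft_mul_conjTranspose_Ft : Ft G * (Ft G)ᴴ = diagonal (fun v => (G.degree v : ℂ)) := by
  ext v w
  rw [mul_apply]
  by_cases h : v = w
  · subst h
    rw [diagonal_apply_eq, ← card_filter_arcT_eq_degree G v, Finset.card_filter, Nat.cast_sum]
    refine Finset.sum_congr rfl fun a _ => ?_
    by_cases hv : v = arcT a <;> simp [Ft, hv, Ne.symm]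
  · refine (Finset.sum_eq_zero fun a _ => ?_).trans (diagonal_apply_ne _ h).symm
    by_cases hv : v = arcT a
    · simp [Ft, hv, show w ≠ arcT a from fun hw => h (hv.trans hw.symm)]
    · simp [Ft, hv]

lemma Fo_mul_conjTranspose_Ft : Fo G * (Ft G)ᴴ = G.adjMatrix ℂ := by
  ext v w
  rw [mul_apply, SimpleGraph.adjMatrix_apply]
  by_cases h : G.Adj v w
  · rw [Finset.sum_eq_single ⟨(v, w), h⟩]
    · simp [Fo, Ft, arcO, arcT, h]
    · rintro ⟨⟨x, y⟩, hxy⟩ _ hne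
      by_cases hx : v = x
      · subst hx
        have : w ≠ y := fun hy => hne (by subst hy; rfl)
        simp [Fo, Ft, arcO, arcT, this]
      · simp [Fo, arcO, hx]
    · simp
  · rw [if_neg h]
    refine Finset.sum_eq_zero fun a _ => ?_
    by_cases hv : v = arcO a
    · by_cases hw : w = arcT a
      · exact absurd (hv ▸ hw ▸ a.2) h
      · simp [Ft, hw]
    · simp [Fo, hv]

lemma bdK_mul_conjTranspose_bdK :
    bdK G * (bdK G)ᴴ = diagonal (fun v => invSqrtDeg G v * invSqrtDeg G v * G.degree v) := by
  rw [conjTranspose_bdK, bdK_eq_diagonal_mul_Ft, Matrix.mul_assoc, ← Matrix.mul_assoc (Ft G),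
    Ft_mul_conjTranspose_Ft, diagonal_mul_diagonal, diagonal_mul_diagonal]
  congr
  funext v
  ring

lemma bdK_mul_shiftS_mul_conjTranspose_bdK :
    bdK G * shiftS G * (bdK G)ᴴ
      = diagonal (invSqrtDeg G) * G.adjMatrix ℂ * diagonal (invSqrtDeg G) := by
  rw [conjTranspose_bdK, bdK_eq_diagonal_mul_Ft, Matrix.mul_assoc _ (Ft G), Ft_mul_shiftS,
    Matrix.mul_assoc, ← Matrix.mul_assoc (Fo G), Fo_mul_conjTranspose_Ft, Matrix.mul_assoc]

end Boundary

section GroverDet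

variable {V : Type} [Fintype V] [DecidableEq V] (G : SimpleGraph V) [DecidableRel G.Adj]

theorem det_smul_one_sub_groverU {l : ℂ} (hl : l ^ 2 - 1 ≠ 0) :
    (l • 1 - groverU G).det = (l ^ 2 - 1) ^ #G.edgeFinset
      * (1 - (2 / (l ^ 2 - 1)) • (l • (bdK G * shiftS G * (bdK G)ᴴ) - bdK G * (bdK G)ᴴ)).det := by
  set S := shiftS G
  set K := bdK G
  have hfac : l • 1 - groverU G
      = (l • 1 + S) * (1 - ((2 / (l ^ 2 - 1)) • ((l • 1 - S) * S * Kᴴ)) * K) := by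
    have hS := smul_one_add_shiftS_mul_smul_one_sub_shiftS G l
    calc l • 1 - groverU G = l • 1 + S - (2 : ℂ) • (S * Kᴴ * K) := by
          rw [groverU, coinC, mul_sub, mul_one, Matrix.mul_smul, Matrix.mul_assoc]
          abel
      _ = _ := by
          rw [mul_sub, mul_one, Matrix.smul_mul, Matrix.mul_smul, ← Matrix.mul_assoc,
            ← Matrix.mul_assoc, ← Matrix.mul_assoc, hS, Matrix.smul_mul, Matrix.smul_mul,
            one_mul, Matrix.smul_mul, smul_smul, div_mul_cancel₀ _ hl]
  have hK : K * ((2 / (l ^ 2 - 1)) • ((l • 1 - S) * S * Kᴴ))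
      = (2 / (l ^ 2 - 1)) • (l • (K * S * Kᴴ) - K * Kᴴ) := by
    rw [Matrix.mul_smul, sub_mul, Matrix.smul_mul, one_mul, shiftS_mul_shiftS, Matrix.sub_mul,
      Matrix.one_mul, Matrix.smul_mul, Matrix.mul_sub, Matrix.mul_smul, Matrix.mul_assoc K S]
  rw [hfac, det_mul, det_smul_one_add_shiftS, det_one_sub_mul_comm, hK]

end GroverDet

lemma det_smul_one_add_smul_of_one {ι : Type} [Fintype ι] [DecidableEq ι] [Nonempty ι]
    (α β : ℂ) :
    (α • (1 : Matrix ι ι ℂ) + β • of fun _ _ => 1).det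
      = α ^ (Fintype.card ι - 1) * (α + Fintype.card ι * β) := by
  set n := Fintype.card ι
  set u : Matrix ι Unit ℂ := replicateCol Unit fun _ => -β
  set v : Matrix Unit ι ℂ := replicateRow Unit fun _ => 1
  have hvu : v * u = diagonal fun _ => -(n * β) := by
    ext; simp [u, v, mul_apply, n]
  have hcp : (u * v).charpoly = X ^ (n - 1) * (X - C (-(n * β))) := by
    have h := charpoly_mul_comm' u v
    rw [Fintype.card_unit, pow_one, hvu, charpoly_diagonal, Fintype.prod_unique,
      ← Nat.sub_add_cancel Fintype.card_pos, pow_succ, mul_comm (X ^ _) X, mul_assoc] at h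
    exact mul_left_cancel₀ X_ne_zero h
  have hJ : α • (1 : Matrix ι ι ℂ) + β • of (fun _ _ => 1) = scalar ι α - u * v := by
    ext i j
    simp [u, v, scalar_apply, smul_one_eq_diagonal, mul_apply]
  rw [hJ, ← eval_charpoly, hcp]
  simp

section CompleteGraph

variable {V : Type} [DecidableEq V] {G : SimpleGraph V} [DecidableRel G.Adj]

lemma adjMatrix_of_eq_top (hG : G = ⊤) : G.adjMatrix ℂ = of (fun _ _ => 1) - 1 := by
  ext v w
  by_cases h : v = w <;> simp [hG, h, one_apply_ne]

variable [Fintype V]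

lemma degree_of_eq_top (hG : G = ⊤) (v : V) : G.degree v = Fintype.card V - 1 := by
  have : G.neighborFinset v = univ.erase v := by
    ext w
    simp [hG, eq_comm]
  rw [← G.card_neighborFinset_eq_degree, this, card_erase_of_mem (mem_univ v), card_univ]

lemma card_edgeFinset_of_eq_top (hG : G = ⊤) :
    #G.edgeFinset = Fintype.card V * (Fintype.card V - 1) / 2 := by
  have h := G.sum_degrees_eq_twice_card_edges
  simp only [degree_of_eq_top hG, sum_const, card_univ, smul_eq_mul] at h
  omega

lemma bdK_mul_conjTranspose_bdK_of_eq_top (hG : G = ⊤) (hV : 2 ≤ Fintype.card V) :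
    bdK G * (bdK G)ᴴ = 1 := by
  rw [bdK_mul_conjTranspose_bdK, ← diagonal_one]
  congr
  funext v
  have : (G.degree v : ℂ) ≠ 0 := by rw [degree_of_eq_top hG]; norm_cast; omega
  rw [invSqrtDeg_mul_self, inv_mul_cancel₀ this]

lemma bdK_mul_shiftS_mul_conjTranspose_bdK_of_eq_top (hG : G = ⊤) (hV : 1 ≤ Fintype.card V) :
    bdK G * shiftS G * (bdK G)ᴴ = ((Fintype.card V : ℂ) - 1)⁻¹ • (of (fun _ _ => 1) - 1) := by
  obtain ⟨v₀⟩ : Nonempty V := Fintype.card_pos_iff.mp hV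
  have hρ (v : V) : invSqrtDeg G v = invSqrtDeg G v₀ := by
    simp only [invSqrtDeg, degree_of_eq_top hG]
  rw [bdK_mul_shiftS_mul_conjTranspose_bdK, adjMatrix_of_eq_top hG, funext hρ,
    ← smul_one_eq_diagonal, Matrix.smul_mul, Matrix.one_mul, Matrix.mul_smul, Matrix.mul_one,
    smul_smul, invSqrtDeg_mul_self, degree_of_eq_top hG, Nat.cast_sub hV, Nat.cast_one]

lemma det_smul_one_sub_groverU_of_eq_top (hG : G = ⊤) (hV : 2 ≤ Fintype.card V) {l : ℂ}
    (hl : l ^ 2 - 1 ≠ 0) :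
    (l • 1 - groverU G).det = (l ^ 2 - 1) ^ (Fintype.card V * (Fintype.card V - 1) / 2)
      * ((l ^ 2 + 2 / ((Fintype.card V : ℂ) - 1) * l + 1) / (l ^ 2 - 1)) ^ (Fintype.card V - 1)
      * ((l - 1) ^ 2 / (l ^ 2 - 1)) := by
  have : Nonempty V := Fintype.card_pos_iff.mp (by omega)
  have hm : (Fintype.card V : ℂ) - 1 ≠ 0 := by
    rw [sub_ne_zero]; norm_cast; omega
  set m := (Fintype.card V : ℂ) - 1
  set c := 2 / (l ^ 2 - 1) with hc
  have hmat : (1 : Matrix V V ℂ) - c • (l • (m⁻¹ • (of (fun _ _ => 1) - 1)) - 1)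
      = (1 + c + c * l * m⁻¹) • 1 + (-(c * l * m⁻¹)) • of (fun _ _ => 1) := by
    module
  have hα : 1 + c + c * l * m⁻¹ = (l ^ 2 + 2 / m * l + 1) / (l ^ 2 - 1) := by
    rw [hc]; field_simp; ring
  have hαβ : 1 + c + c * l * m⁻¹ + Fintype.card V * -(c * l * m⁻¹) = (l - 1) ^ 2 / (l ^ 2 - 1) := by
    rw [hc, show (Fintype.card V : ℂ) = m + 1 by ring]
    field_simp; ring
  rw [det_smul_one_sub_groverU G hl, bdK_mul_shiftS_mul_conjTranspose_bdK_of_eq_top hG (by omega),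
    bdK_mul_conjTranspose_bdK_of_eq_top hG hV, card_edgeFinset_of_eq_top hG, hmat,
    det_smul_one_add_smul_of_one, hαβ, hα, mul_assoc]

theorem charpoly_groverU_of_eq_top (hG : G = ⊤) (hV : 3 ≤ Fintype.card V) :
    (groverU G).charpoly
      = (X - C 1) ^ (Fintype.card V * (Fintype.card V - 1) / 2 - Fintype.card V + 2)
        * (X - C (-1)) ^ (Fintype.card V * (Fintype.card V - 1) / 2 - Fintype.card V)
        * (X ^ 2 - C (2 * (-1 / ((Fintype.card V : ℂ) - 1))) * X + 1) ^ (Fintype.card V - 1) := by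
  have hE : Fintype.card V ≤ Fintype.card V * (Fintype.card V - 1) / 2 := by
    rw [Nat.le_div_iff_mul_le two_pos]
    exact Nat.mul_le_mul_left _ (by omega)
  obtain ⟨N, hN⟩ : ∃ N, Fintype.card V * (Fintype.card V - 1) / 2 = N + Fintype.card V :=
    ⟨_, (Nat.sub_add_cancel hE).symm⟩
  obtain ⟨k, hk⟩ : ∃ k, Fintype.card V = k + 1 := ⟨Fintype.card V - 1, by omega⟩
  refine eq_of_infinite_eval_eq _ _ (Set.Infinite.mono (fun l hl => ?_)
    ((Set.toFinite {1, -1}).infinite_compl))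
  simp only [Set.mem_compl_iff, Set.mem_insert_iff, Set.mem_singleton_iff, not_or] at hl
  have h₁ : l - 1 ≠ 0 := sub_ne_zero.mpr hl.1
  have h₂ : l + 1 ≠ 0 := fun h => hl.2 (eq_neg_of_add_eq_zero_left h)
  have hl2 : l ^ 2 - 1 = (l - 1) * (l + 1) := by ring
  simp only [Set.mem_ofPred_eq, eval_charpoly, scalar_apply, ← smul_one_eq_diagonal]
  rw [det_smul_one_sub_groverU_of_eq_top hG (by omega) (hl2 ▸ mul_ne_zero h₁ h₂), hN, hk]
  simp only [eval_mul, eval_pow, eval_sub, eval_add, eval_X, eval_C, eval_one, Nat.cast_add,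
    Nat.cast_one, add_tsub_cancel_right, sub_neg_eq_add, hl2]
  rw [pow_add, pow_succ, div_pow]
  field_simp
  rw [mul_pow]
  ring

end CompleteGraph

lemma Multiset.replicate_bind {α β : Type} (m : ℕ) (a : α) (f : α → Multiset β) :
    (Multiset.replicate m a).bind f = m • f a := by
  induction m with
  | zero => simp
  | succ m ih => rw [Multiset.replicate_succ, Multiset.cons_bind, ih, succ_nsmul, add_comm]

lemma separable_X_sq_sub_C_mul_X_add_one {μ : ℂ} (hμ : μ ^ 2 ≠ 1) :
    (X ^ 2 - C (2 * μ) * X + 1 : ℂ[X]).Separable := by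
  have hc : (1 - μ ^ 2) ≠ 0 := sub_ne_zero.mpr (Ne.symm hμ)
  rw [separable_def]
  -- `2 p - (X - μ) p' = 2 (1 - μ²)`
  refine ⟨C (1 - μ ^ 2)⁻¹, -C ((2 * (1 - μ ^ 2))⁻¹) * (X - C μ), ?_⟩
  refine Polynomial.funext fun t => ?_
  simp only [map_mul, _root_.mul_inv_rev, neg_mul, derivative_sub,
    derivative_X_pow_succ, Nat.cast_one, map_add, map_one, pow_one, derivative_mul, derivative_C,
    zero_mul, mul_zero, add_zero, derivative_X, mul_one, zero_add, derivative_one, eval_add,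
    eval_mul, eval_C, eval_sub, eval_pow, eval_X, eval_one, eval_neg]
  field_simp
  ring

lemma roots_eq_replicate_add_bind_phiInv {μ : ℂ} (hμ : μ ^ 2 ≠ 1) (p q m : ℕ) :
    ((X - C 1) ^ p * (X - C (-1)) ^ q * (X ^ 2 - C (2 * μ) * X + 1) ^ m : ℂ[X]).roots
      = Multiset.replicate p 1 + Multiset.replicate q (-1)
        + (Multiset.replicate m μ).bind phiInv := by
  have hQ : (X ^ 2 - C (2 * μ) * X + 1 : ℂ[X]).Monic := by
    monicity!
  have h₁ := (monic_X_sub_C (1 : ℂ)).pow p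
  have h₂ := (monic_X_sub_C (-1 : ℂ)).pow q
  rw [roots_mul ((h₁.mul h₂).mul (hQ.pow m)).ne_zero, roots_mul (h₁.mul h₂).ne_zero, roots_pow,
    roots_pow, roots_pow, roots_X_sub_C, roots_X_sub_C, Multiset.nsmul_singleton,
    Multiset.nsmul_singleton, Multiset.replicate_bind, phiInv,
    Multiset.dedup_eq_self.mpr (nodup_roots (separable_X_sq_sub_C_mul_X_add_one hμ))]

lemma Ydigraph_adj {n a : ℕ} {x y : Fin n} :
    (Ydigraph n a).Adj x y ↔ x ≠ y ∧ (x.val < a ∧ y.val < a ∨ a ≤ x.val ∧ a ≤ y.val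
      ∨ x.val < a ∧ a ≤ y.val) := by
  simp [Dgraph.Adj, Ydigraph]

lemma underlying_Ydigraph (n a : ℕ) : (Ydigraph n a).underlying = ⊤ := by
  ext x y
  simp only [Dgraph.underlying, Ydigraph_adj, SimpleGraph.top_adj]
  omega

lemma etaFun_Ydigraph (n a : ℕ) (η : ℝ) (b : GArc (Ydigraph n a).underlying) :
    etaFun (Ydigraph n a) η b
      = (if (arcT b).val < a then 0 else η) - (if (arcO b).val < a then 0 else η) := by
  have h := Fin.val_ne_of_ne (arcO_ne_arcT b)
  simp only [etaFun, Ydigraph_adj, ne_eq, Fin.ext_iff]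
  split_ifs <;> first | omega | ring

theorem stmt8_general (n : ℕ) (hn : 3 ≤ n) (a : ℕ) (η : ℝ) :
    (transferU (Ydigraph n a).underlying (etaFun (Ydigraph n a) η)).charpoly.roots =
      Multiset.replicate (n * (n - 1) / 2 - n + 2) 1
        + Multiset.replicate (n * (n - 1) / 2 - n) (-1)
        + (Multiset.replicate (n - 1) (-1 / ((n : ℂ) - 1))).bind phiInv ∧
    (transferU (Ydigraph n a).underlying (etaFun (Ydigraph n a) η)).charpoly =
      (transferU (Ydigraph n n).underlying (etaFun (Ydigraph n n) η)).charpoly := by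
  have hμ : (-1 / ((n : ℂ) - 1)) ^ 2 ≠ 1 := by
    have h2 : (2 : ℝ) ≤ n - 1 := by
      have : (3 : ℝ) ≤ n := by exact_mod_cast hn
      linarith
    rw [show (-1 / ((n : ℂ) - 1)) ^ 2 = (((-1 / ((n : ℝ) - 1)) ^ 2 : ℝ) : ℂ) by push_cast; ring,
      Ne, ← Complex.ofReal_one, Complex.ofReal_inj, div_pow, neg_one_sq,
      div_eq_one_iff_eq (by positivity)]
    nlinarith
  have hcharpoly (m : ℕ) := (charpoly_transferU_of_eq_sub _
      (fun x : Fin n => if x.val < m then 0 else η) (etaFun_Ydigraph n m η)).trans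
    (charpoly_groverU_of_eq_top (underlying_Ydigraph n m) (by rwa [Fintype.card_fin]))
  simp only [Fintype.card_fin] at hcharpoly
  exact ⟨by rw [hcharpoly, roots_eq_replicate_add_bind_phiInv hμ],
    (hcharpoly a).trans (hcharpoly n).symm⟩

/-- For `n ≥ 3` and `a ∈ {0,…,n−1}`, the spectrum of the transfer matrix of `Y_{a,n−a}` is
`{1^{(n(n−1)/2−n+2)}, (−1)^{(n(n−1)/2−n)}, φ⁻¹((−1/(n−1))^{(n−1)})}`; in particular the
digraphs `Y_{a,n−a}` are `U_θ`-cospectral with `K_n = Y_{n,0}`. -/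
theorem stmt8 (n : ℕ) (hn : 3 ≤ n) (a : ℕ) (ha : a ≤ n - 1) (η : ℝ) :
    (transferU (Ydigraph n a).underlying (etaFun (Ydigraph n a) η)).charpoly.roots =
      Multiset.replicate (n * (n - 1) / 2 - n + 2) 1
        + Multiset.replicate (n * (n - 1) / 2 - n) (-1)
        + (Multiset.replicate (n - 1) (-1 / ((n : ℂ) - 1))).bind phiInv ∧
    (transferU (Ydigraph n a).underlying (etaFun (Ydigraph n a) η)).charpoly =
      (transferU (Ydigraph n n).underlying (etaFun (Ydigraph n n) η)).charpoly :=
  stmt8_general n hn a η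
end

section
/- Suppose k ≥ 3 and let G be a k-regular digraph (with connected underlying graph) equipped with an η-function θ. For arcs a, b ∈ A(G)^{±1}, the set 𝒜(a,b) = {z ∈ A(G)^{±1} : e^{−iθ(z)} U_{az} U_{zb} ≠ 0}, where U = U(G^±), has at most one element; and |𝒜(a,b)| = 1 if and only if exactly one of the following holds: (i) a = b; (ii) o(a) = o(b) and a ≠ b; (iii) t(a) = t(b) and a ≠ b; (iv) t(b) is adjacent to o(a) in G^± and (a,b) satisfies none of (i), (ii), (iii). -/
open Matrix Polynomial

noncomputable section

variable {V : Type} [Fintype V] [DecidableEq V]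

/-!
In `U = SC` the entry `U_{az}` is `2/k - δ_{z,a⁻¹}` when `t(z) = o(a)` and `0` otherwise; since
`k ≠ 2` it vanishes exactly when `t(z) ≠ o(a)`. The phase `e^{-iθ(z)}` never vanishes, so
`𝒜(a,b)` is the set of arcs from `t(b)` to `o(a)`: a single arc if `t(b) ∼ o(a)` and none
otherwise. Each of (i)–(iii) already makes `t(b)` adjacent to `o(a)`, so the disjunction
(i)–(iv) is equivalent to `t(b) ∼ o(a)`.
-/

section GroverEntries

variable {G : SimpleGraph V} [DecidableRel G.Adj]

lemma shiftS_mul_apply (M : Matrix (GArc G) (GArc G) ℂ) (a z : GArc G) :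
    (shiftS G * M) a z = M (arcInv a) z := by
  rw [Matrix.mul_apply, Finset.sum_eq_single (arcInv a)]
  · simp [shiftS, arcInv]
  · intro x _ hx
    have : a ≠ arcInv x := fun h => hx (by rw [h]; rfl)
    simp [shiftS, this]
  · simp

lemma coinC_apply (x z : GArc G) :
    coinC G x z = (if arcT x = arcT z then 2 / (G.degree (arcT x) : ℂ) else 0)
      - if x = z then 1 else 0 := by
  simp only [coinC, Matrix.sub_apply, Matrix.smul_apply, Matrix.mul_apply,
    Matrix.conjTranspose_apply, Matrix.one_apply, bdK, smul_eq_mul]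
  congr 1
  simp only [apply_ite (star : ℂ → ℂ), star_zero, RCLike.star_def, Complex.conj_ofReal,
    ite_mul, zero_mul, mul_ite, mul_zero, Finset.sum_ite_eq', Finset.mem_univ, if_true]
  split_ifs with h h' h'
  · rw [h, ← sq, ← Complex.ofReal_pow, div_pow, one_pow,
      Real.sq_sqrt (Nat.cast_nonneg _)]
    push_cast
    ring
  all_goals first | exact absurd h.symm h' | exact absurd h'.symm h | rfl

lemma groverU_apply (a z : GArc G) :
    groverU G a z = (if arcO a = arcT z then 2 / (G.degree (arcO a) : ℂ) else 0)
      - if arcInv a = z then 1 else 0 := by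
  rw [groverU, shiftS_mul_apply, coinC_apply]
  rfl

lemma groverU_apply_ne_zero_iff {a z : GArc G} (hdeg : G.degree (arcO a) ≠ 2) :
    groverU G a z ≠ 0 ↔ arcO a = arcT z := by
  have hpos : (G.degree (arcO a) : ℂ) ≠ 0 :=
    Nat.cast_ne_zero.2 ((G.degree_pos_iff_exists_adj _).2 ⟨_, a.2⟩).ne'
  rw [groverU_apply]
  by_cases hz : arcInv a = z
  · subst hz
    have ht : arcO a = arcT (arcInv a) := rfl
    rw [if_pos rfl, if_pos ht, sub_ne_zero, Ne, div_eq_one_iff_eq hpos]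
    exact iff_of_true (mod_cast hdeg.symm) ht
  · rw [if_neg hz, sub_zero]
    split_ifs with ho
    · simp [ho, hpos]
    · simp [ho]

lemma setOf_mul_groverU_mul_groverU_ne_zero (hdeg : ∀ v, G.degree v ≠ 2)
    {c : GArc G → ℂ} (hc : ∀ z, c z ≠ 0) (a b : GArc G) :
    {z | c z * groverU G a z * groverU G z b ≠ 0} =
      {z | arcO z = arcT b ∧ arcT z = arcO a} := by
  ext z
  simp only [Set.mem_ofPred_eq, mul_ne_zero_iff, groverU_apply_ne_zero_iff (hdeg _)]
  exact ⟨fun ⟨⟨_, hz⟩, hb⟩ => ⟨hb, hz.symm⟩,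
    fun ⟨hb, hz⟩ => ⟨⟨hc z, hz.symm⟩, hb⟩⟩

end GroverEntries

omit [Fintype V] [DecidableEq V] in
lemma ncard_setOf_arcO_arcT {G : SimpleGraph V} [DecidableRel G.Adj] (x y : V) :
    {z : GArc G | arcO z = x ∧ arcT z = y}.ncard = if G.Adj x y then 1 else 0 := by
  split_ifs with hxy
  · convert Set.ncard_singleton (⟨(x, y), hxy⟩ : GArc G)
    ext z
    exact ⟨fun ⟨hx, hy⟩ => Subtype.ext (Prod.ext hx hy),
      fun hz => by subst hz; exact ⟨rfl, rfl⟩⟩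
  · convert Set.ncard_empty (GArc G)
    refine Set.eq_empty_of_forall_notMem fun z ⟨hx, hy⟩ => hxy ?_
    exact hx ▸ hy ▸ z.2

omit [Fintype V] [DecidableEq V] in
lemma adj_arcT_arcO_of_eq_or {G : SimpleGraph V} {a b : GArc G}
    (h : a = b ∨ arcO a = arcO b ∨ arcT a = arcT b) : G.Adj (arcT b) (arcO a) := by
  rcases h with rfl | h | h
  · exact a.2.symm
  · rw [h]
    exact b.2.symm
  · rw [← h]
    exact a.2.symm

theorem stmt11_general {V : Type} [Fintype V] [DecidableEq V] (k : ℕ) (hk : 3 ≤ k) (η : ℝ)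
    (D : Dgraph V)
    (hreg : ∀ v, D.underlying.degree v = k)
    (a b : GArc D.underlying) :
    let U := groverU D.underlying
    let Aab : Set (GArc D.underlying) :=
      {z | Complex.exp (-(etaFun D η z : ℂ) * Complex.I) * U a z * U z b ≠ 0}
    Aab.ncard ≤ 1 ∧
    (Aab.ncard = 1 ↔
      a = b ∨ (arcO a = arcO b ∧ a ≠ b) ∨ (arcT a = arcT b ∧ a ≠ b) ∨
        (D.underlying.Adj (arcT b) (arcO a) ∧ ¬(a = b) ∧
          ¬(arcO a = arcO b ∧ a ≠ b) ∧ ¬(arcT a = arcT b ∧ a ≠ b))) := by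
  intro U Aab
  have hdeg : ∀ v, D.underlying.degree v ≠ 2 := fun v => by rw [hreg v]; omega
  have hA : Aab = {z | arcO z = arcT b ∧ arcT z = arcO a} :=
    setOf_mul_groverU_mul_groverU_ne_zero hdeg (fun _ => Complex.exp_ne_zero _) a b
  have hadj_of_cases := @adj_arcT_arcO_of_eq_or _ D.underlying a b
  rw [hA, ncard_setOf_arcO_arcT]
  split_ifs with hadj
  · exact ⟨le_rfl, iff_of_true rfl (by tauto)⟩
  · exact ⟨zero_le_one, iff_of_false (by simp) (by tauto)⟩

/-- For a `k`-regular digraph (`k ≥ 3`), the set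
`𝒜(a,b) = {z : e^{−iθ(z)} U_{az} U_{zb} ≠ 0}` has at most one element, with exactly one
element iff (i) `a = b`, (ii) `o(a) = o(b)` and `a ≠ b`, (iii) `t(a) = t(b)` and `a ≠ b`,
or (iv) `t(b) ∼ o(a)` in `G^±` and none of (i), (ii), (iii) holds. -/
theorem stmt11 {V : Type} [Fintype V] [DecidableEq V] (k : ℕ) (hk : 3 ≤ k) (η : ℝ)
    (D : Dgraph V) (hconn : D.underlying.Connected)
    (hreg : ∀ v, D.underlying.degree v = k)
    (a b : GArc D.underlying) :
    let U := groverU D.underlying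
    let Aab : Set (GArc D.underlying) :=
      {z | Complex.exp (-(etaFun D η z : ℂ) * Complex.I) * U a z * U z b ≠ 0}
    Aab.ncard ≤ 1 ∧
    (Aab.ncard = 1 ↔
      a = b ∨ (arcO a = arcO b ∧ a ≠ b) ∨ (arcT a = arcT b ∧ a ≠ b) ∨
        (D.underlying.Adj (arcT b) (arcO a) ∧ ¬(a = b) ∧
          ¬(arcO a = arcO b ∧ a ≠ b) ∧ ¬(arcT a = arcT b ∧ a ≠ b))) :=
  stmt11_general k hk η D hreg a b
end
end

section
/- Let G be a digraph (with connected underlying graph) equipped with an η-function θ, and let G⁻¹ = (V(G), A(G)⁻¹) be its transpose digraph equipped with its own η-function. Then for ε ∈ {+,−}, the supports of the square of the transfer matrices coincide: U_θ^{(2,ε)}(G) = U_θ^{(2,ε)}(G⁻¹). -/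
/-! On the common arc set of `G^±`, the η-function of `G⁻¹` is `-θ`. The coin `C` is a real
matrix, and complex conjugation turns `S_θ` and `D_θ` into `S_{-θ}` and `D_{-θ}`; hence
`D_{-θ} U_{-θ}ⁿ` is the entrywise conjugate of `D_θ U_θⁿ` for every `n`, and conjugation
does not change real parts. -/

open Matrix Polynomial

lemma conj_exp_ofReal_mul_I (t : ℝ) :
    starRingEnd ℂ (Complex.exp (t * Complex.I)) = Complex.exp ((-t : ℝ) * Complex.I) := by
  rw [← Complex.exp_conj, map_mul, Complex.conj_ofReal, Complex.conj_I]
  push_cast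
  ring_nf

section Conjugation

variable {V : Type} [DecidableEq V] (G : SimpleGraph V)

lemma Dtheta_map_conj (θ : GArc G → ℝ) :
    (Dtheta G θ).map (starRingEnd ℂ) = Dtheta G (-θ) := by
  simp only [Dtheta, Matrix.diagonal_map (map_zero _), conj_exp_ofReal_mul_I, Pi.neg_apply]

variable [Fintype V] [DecidableRel G.Adj]

lemma bdK_map_conj : (bdK G).map (starRingEnd ℂ) = bdK G := by
  ext v a
  simp only [bdK, Matrix.map_apply, apply_ite (starRingEnd ℂ), Complex.conj_ofReal, map_zero]

lemma coinC_map_conj : (coinC G).map (starRingEnd ℂ) = coinC G := by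
  have hK : (bdK G)ᴴ.map (starRingEnd ℂ) = (bdK G)ᴴ := by
    rw [Matrix.conjTranspose_map (starRingEnd ℂ) fun _ => rfl, bdK_map_conj]
  rw [coinC, two_smul, Matrix.map_sub _ (map_sub _), Matrix.map_add _ (map_add _), Matrix.map_mul,
    hK, bdK_map_conj, Matrix.map_one _ (map_zero _) (map_one _)]

lemma transferU_map_conj (θ : GArc G → ℝ) :
    (transferU G θ).map (starRingEnd ℂ) = transferU G (-θ) := by
  have hS : (shiftStheta G θ).map (starRingEnd ℂ) = shiftStheta G (-θ) := by
    ext a b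
    simp only [shiftStheta, Matrix.map_apply, apply_ite (starRingEnd ℂ), conj_exp_ofReal_mul_I,
      map_zero, Pi.neg_apply]
  rw [transferU, Matrix.map_mul, hS, coinC_map_conj, transferU]

lemma Dtheta_mul_transferU_pow_neg (θ : GArc G → ℝ) (n : ℕ) :
    Dtheta G (-θ) * transferU G (-θ) ^ n =
      (Dtheta G θ * transferU G θ ^ n).map (starRingEnd ℂ) := by
  rw [← Dtheta_map_conj, ← transferU_map_conj, Matrix.map_mul]
  exact congrArg _ (map_pow (starRingEnd ℂ).mapMatrix _ n).symm

end Conjugation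

namespace Dgraph

variable {V : Type}

lemma transpose_adj (D : Dgraph V) (x y : V) : D.transpose.Adj x y ↔ D.Adj y x := Iff.rfl

lemma underlying_transpose (D : Dgraph V) : D.transpose.underlying = D.underlying :=
  SimpleGraph.ext <| funext₂ fun _ _ => propext Or.comm

lemma etaFun_transpose (D : Dgraph V) (η : ℝ) {a : GArc D.underlying}
    {a' : GArc D.transpose.underlying} (ha : a.val = a'.val) :
    etaFun D.transpose η a' = -etaFun D η a := by
  have ho : arcO a' = arcO a := congrArg Prod.fst ha.symm
  have ht : arcT a' = arcT a := congrArg Prod.snd ha.symm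
  have hadj : D.Adj (arcO a) (arcT a) ∨ D.Adj (arcT a) (arcO a) := a.2
  simp only [etaFun, ho, ht, transpose_adj]
  by_cases h₁ : D.Adj (arcO a) (arcT a) <;> by_cases h₂ : D.Adj (arcT a) (arcO a) <;> simp_all

end Dgraph

lemma Dtheta_mul_transferU_pow_apply_congr {V : Type} [Fintype V] [DecidableEq V]
    {G G' : SimpleGraph V} [iG : DecidableRel G.Adj] [iG' : DecidableRel G'.Adj] (hG : G = G')
    {θ : GArc G → ℝ} {θ' : GArc G' → ℝ} (hθ : ∀ a a', a.val = a'.val → θ' a' = θ a) (n : ℕ)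
    {a b : GArc G} {a' b' : GArc G'} (ha : a.val = a'.val) (hb : b.val = b'.val) :
    (Dtheta G' θ' * transferU G' θ' ^ n) a' b' = (Dtheta G θ * transferU G θ ^ n) a b := by
  subst hG
  obtain rfl : iG = iG' := Subsingleton.elim _ _
  obtain rfl : θ' = θ := funext fun c => hθ c c rfl
  obtain rfl : a' = a := Subtype.ext ha.symm
  obtain rfl : b' = b := Subtype.ext hb.symm
  rfl

section Transpose

variable {V : Type} [Fintype V] [DecidableEq V] (D : Dgraph V) (η : ℝ) (n : ℕ)

lemma Dtheta_mul_transferU_pow_transpose_apply {a b : GArc D.underlying}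
    {a' b' : GArc D.transpose.underlying} (ha : a.val = a'.val) (hb : b.val = b'.val) :
    (Dtheta _ (etaFun D.transpose η) * transferU _ (etaFun D.transpose η) ^ n) a' b' =
      starRingEnd ℂ ((Dtheta _ (etaFun D η) * transferU _ (etaFun D η) ^ n) a b) := by
  rw [Dtheta_mul_transferU_pow_apply_congr D.underlying_transpose.symm (θ := -etaFun D η)
    (fun _ _ h => D.etaFun_transpose η h) n ha hb, Dtheta_mul_transferU_pow_neg,
    Matrix.map_apply]

lemma suppPow_transpose {a b : GArc D.underlying} {a' b' : GArc D.transpose.underlying}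
    (ha : a.val = a'.val) (hb : b.val = b'.val) :
    suppPow D.transpose η n a' b' = suppPow D η n a b := by
  simp only [suppPow, suppPos, Dtheta_mul_transferU_pow_transpose_apply D η n ha hb,
    Complex.conj_re]

lemma suppPowNeg_transpose {a b : GArc D.underlying} {a' b' : GArc D.transpose.underlying}
    (ha : a.val = a'.val) (hb : b.val = b'.val) :
    suppPowNeg D.transpose η n a' b' = suppPowNeg D η n a b := by
  simp only [suppPowNeg, suppNeg, Dtheta_mul_transferU_pow_transpose_apply D η n ha hb,
    Complex.conj_re]

end Transpose

theorem stmt15_general {V : Type} [Fintype V] [DecidableEq V] (η : ℝ) (D : Dgraph V)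
    (a b : GArc D.underlying) (a' b' : GArc D.transpose.underlying)
    (ha : a.val = a'.val) (hb : b.val = b'.val) :
    suppPow D η 2 a b = suppPow D.transpose η 2 a' b' ∧
    suppPowNeg D η 2 a b = suppPowNeg D.transpose η 2 a' b' :=
  ⟨(suppPow_transpose D η 2 ha hb).symm, (suppPowNeg_transpose D η 2 ha hb).symm⟩

/-- The supports of the square of the transfer matrix of a digraph and of its transpose
coincide (under the canonical identification of the common arc set `A(G^±)` of the common
underlying graph, expressed entrywise via equality of underlying ordered pairs). -/
theorem stmt15 {V : Type} [Fintype V] [DecidableEq V] (η : ℝ) (D : Dgraph V)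
    (hconn : D.underlying.Connected)
    (a b : GArc D.underlying) (a' b' : GArc D.transpose.underlying)
    (ha : a.val = a'.val) (hb : b.val = b'.val) :
    suppPow D η 2 a b = suppPow D.transpose η 2 a' b' ∧
    suppPowNeg D η 2 a b = suppPowNeg D.transpose η 2 a' b' :=
  stmt15_general η D a b a' b' ha hb
end
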